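/- (Theorem 1) Let y = A·x_S where x_S ∈ ℝⁿ is K-sparse with support S, and A satisfies the RIP of order 3K with constant δ_{3K} and of order 4K with constant δ_{4K} < 1, with ρ_{4K} < 1. Let (x^n)_{n ≥ 0} be CoSaMP iterates starting from x^0 = 0, each obtained from the previous by one CoSaMP iteration. Then x^{⌈cK⌉} = x_S, where c = ln(4/ρ_{4K}²)/ln(1/ρ_{4K}²). -/

import Mathlib

/-!
One CoSaMP step from a `K`-sparse iterate `xⁿ` misses the indices `T = S \ U` of the support `S`
of `x_S` that lie outside the augmented set `U`; the RIP of order `4K` yields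
`‖x_S - xⁿ⁺¹‖² ≤ (1 + 2δ²)/(1 - δ²) ‖(x_S)_T‖²` and `‖(x_S)_T‖² ≤ 2δ² ‖x_S - xⁿ‖²`.
Hence `tₙ = 2δ² ‖x_S - xⁿ‖²` satisfies `tₙ₊₁ ≤ ρ² w(Tₙ)` and `w(Tₙ) ≤ tₙ` for some `Tₙ ⊆ S`,
where `w i = (x_S i)²`. For such a sequence the potential
`log (4/ρ²) · #B - log⁺ (w(B) / t)`, with `B = {i ∈ S | w i ≤ t}` the indices that can still
be missed at level `t`, drops by at least `log (1/ρ²)` at each step and stays above `log (1/ρ²)`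
while the next level is positive. It starts below `log (4/ρ²) · |S|`, so the error vanishes
after `⌈c |S|⌉` steps.
-/

open Finset

/-- Euclidean norm of a vector. -/
noncomputable def euclNorm {d : ℕ} (x : Fin d → ℝ) : ℝ := Real.sqrt (∑ i, x i ^ 2)

/-- The support of a vector, as a finite set of indices. -/
noncomputable def supp {d : ℕ} (x : Fin d → ℝ) : Finset (Fin d) :=
  Finset.univ.filter (fun i => x i ≠ 0)

/-- `restrict x T` agrees with `x` on `T` and is zero outside `T`. -/
def restrict {d : ℕ} (x : Fin d → ℝ) (T : Finset (Fin d)) : Fin d → ℝ :=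
  fun i => if i ∈ T then x i else 0

/-- `A` satisfies the Restricted Isometry Property of order `L` with constant `δ ∈ (0,1)`. -/
def RIP {m d : ℕ} (A : Matrix (Fin m) (Fin d) ℝ) (L : ℕ) (δ : ℝ) : Prop :=
  0 < δ ∧ δ < 1 ∧
  ∀ x : Fin d → ℝ, (supp x).card ≤ L →
    (1 - δ) * euclNorm x ^ 2 ≤ euclNorm (A.mulVec x) ^ 2 ∧
    euclNorm (A.mulVec x) ^ 2 ≤ (1 + δ) * euclNorm x ^ 2

/-- `u` is the least-squares solution on the index set `U`: it is supported on `U` and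
`y - A u` is orthogonal to `A z` whenever `z` is supported on `U`. -/
def LeastSq {m d : ℕ} (A : Matrix (Fin m) (Fin d) ℝ) (y : Fin m → ℝ)
    (U : Finset (Fin d)) (u : Fin d → ℝ) : Prop :=
  supp u ⊆ U ∧ ∀ z : Fin d → ℝ, supp z ⊆ U →
    ∑ i, (y i - A.mulVec u i) * A.mulVec z i = 0

/-- One CoSaMP iteration with sparsity `K`, mapping the iterate `xprev` to `xnext`:
identification (`h`, the `2K` largest residual correlations), augmentation
(`supp xprev ∪ h`), least-squares estimation (`u`), and hard-thresholding update. -/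
def CoSaMPStep {m d : ℕ} (K : ℕ) (A : Matrix (Fin m) (Fin d) ℝ) (y : Fin m → ℝ)
    (xprev xnext : Fin d → ℝ) : Prop :=
  ∃ (h Snext : Finset (Fin d)) (u : Fin d → ℝ),
    h.card = 2 * K ∧
    (∀ i ∈ h, ∀ j ∉ h,
      |A.transpose.mulVec (y - A.mulVec xprev) j| ≤
        |A.transpose.mulVec (y - A.mulVec xprev) i|) ∧
    LeastSq A y (supp xprev ∪ h) u ∧
    Snext ⊆ supp xprev ∪ h ∧ Snext.card = K ∧
    (∀ i ∈ Snext, ∀ j ∉ Snext, |u j| ≤ |u i|) ∧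
    xnext = restrict u Snext

open Finset Matrix Real

section Support

variable {d : ℕ}

lemma mem_supp {x : Fin d → ℝ} {i : Fin d} : i ∈ supp x ↔ x i ≠ 0 := by
  simp [supp]

lemma eq_zero_of_notMem_supp {x : Fin d → ℝ} {i : Fin d} (h : i ∉ supp x) : x i = 0 := by
  simpa [supp] using h

lemma supp_sub_subset (x y : Fin d → ℝ) : supp (x - y) ⊆ supp x ∪ supp y := by
  intro i
  simp only [mem_union, mem_supp, Pi.sub_apply]
  contrapose!
  simp +contextual

lemma supp_restrict_subset (x : Fin d → ℝ) (T : Finset (Fin d)) : supp (restrict x T) ⊆ T := by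
  intro i
  simp only [mem_supp, _root_.restrict]
  contrapose!
  simp +contextual

lemma euclNorm_nonneg (x : Fin d → ℝ) : 0 ≤ euclNorm x :=
  Real.sqrt_nonneg _

lemma euclNorm_sq (x : Fin d → ℝ) : euclNorm x ^ 2 = ∑ i, x i ^ 2 :=
  Real.sq_sqrt (by positivity)

lemma dotProduct_self_eq_sum_sq (x : Fin d → ℝ) : x ⬝ᵥ x = ∑ i, x i ^ 2 := by
  simp [dotProduct, sq]

lemma sum_sq_eq_zero_iff {x : Fin d → ℝ} : ∑ i, x i ^ 2 = 0 ↔ x = 0 := by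
  rw [← dotProduct_self_eq_sum_sq, dotProduct_self_eq_zero]

lemma euclNorm_eq_zero {x : Fin d → ℝ} : euclNorm x = 0 ↔ x = 0 := by
  rw [euclNorm, Real.sqrt_eq_zero (by positivity), sum_sq_eq_zero_iff]

lemma sum_sq_sub_eq_add_sum_sq_sdiff (x v : Fin d → ℝ) (U : Finset (Fin d))
    (hv : ∀ i ∉ U, v i = 0) :
    ∑ i, (x - v) i ^ 2 = ∑ i ∈ U, (x - v) i ^ 2 + ∑ i ∈ supp x \ U, x i ^ 2 := by
  rw [← sum_add_sum_compl U]
  congr 1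
  have hsub : supp x \ U ⊆ Uᶜ := fun i hi => by simpa using (mem_sdiff.1 hi).2
  rw [← sum_subset hsub fun i hiU hi => ?_]
  · exact sum_congr rfl fun i hi => by simp [hv i (mem_sdiff.1 hi).2]
  · have hiU : i ∉ U := by simpa using hiU
    simp [hv i hiU, eq_zero_of_notMem_supp fun h => hi (mem_sdiff.2 ⟨h, hiU⟩)]

end Support

lemma Finset.sum_le_sum_of_card_le_of_forall_le {ι : Type*} {s t : Finset ι} {f : ι → ℝ}
    (hcard : #s ≤ #t) (hf : ∀ j ∈ t, 0 ≤ f j) (h : ∀ i ∈ s, ∀ j ∈ t, f i ≤ f j) :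
    ∑ i ∈ s, f i ≤ ∑ j ∈ t, f j := by
  rcases s.eq_empty_or_nonempty with rfl | hs
  · simpa using sum_nonneg hf
  have ht : t.Nonempty := card_pos.1 (hcard.trans_lt' (card_pos.2 hs))
  calc ∑ i ∈ s, f i ≤ #s • t.inf' ht f :=
        sum_le_card_nsmul _ _ _ fun i hi => le_inf' ht f (h i hi)
    _ ≤ #t • t.inf' ht f := nsmul_le_nsmul_left (le_inf' ht f hf) hcard
    _ ≤ ∑ j ∈ t, f j := card_nsmul_le_sum _ _ _ fun j hj => inf'_le f hj

lemma Finset.sum_add_sum_le_of_disjoint {ι : Type*} [DecidableEq ι] {s t u : Finset ι}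
    {f : ι → ℝ} (hst : Disjoint s t) (hs : s ⊆ u) (ht : t ⊆ u) (hf : ∀ i ∈ u, 0 ≤ f i) :
    ∑ i ∈ s, f i + ∑ i ∈ t, f i ≤ ∑ i ∈ u, f i := by
  rw [← sum_union hst]
  exact sum_le_sum_of_subset_of_nonneg (union_subset hs ht) fun i hi _ => hf i hi

namespace RIP

variable {m d L : ℕ} {A : Matrix (Fin m) (Fin d) ℝ} {δ : ℝ}

lemma dotProduct_mulVec_sub_le (hA : RIP A L δ) {x y : Fin d → ℝ}
    (hL : #(supp x ∪ supp y) ≤ L) :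
    A *ᵥ x ⬝ᵥ A *ᵥ y - x ⬝ᵥ y ≤ δ * (euclNorm x * euclNorm y) := by
  set t := euclNorm x * euclNorm y
  have ht : 0 ≤ t := mul_nonneg (euclNorm_nonneg x) (euclNorm_nonneg y)
  rcases ht.eq_or_lt with ht0 | htpos
  · rw [← ht0, mul_zero]
    rcases mul_eq_zero.1 ht0.symm with h | h <;> simp [euclNorm_eq_zero.1 h]
  -- polarization for the rescaled vectors `‖y‖ x` and `‖x‖ y`, which have equal norms
  set a := euclNorm y • x
  set b := euclNorm x • y
  have hcard : ∀ v : Fin d → ℝ, (∀ i, x i = 0 → y i = 0 → v i = 0) → #(supp v) ≤ L :=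
    fun v hv => (card_le_card fun i hi => by
      by_contra h
      simp only [mem_union, mem_supp, not_or, not_not] at h
      exact mem_supp.1 hi (hv i h.1 h.2)).trans hL
  have hup := (hA.2.2 (a + b) (hcard _ fun i hx hy => by simp [a, b, hx, hy])).2
  have hlow := (hA.2.2 (a - b) (hcard _ fun i hx hy => by simp [a, b, hx, hy])).1
  simp only [← dotProduct_self_eq_sum_sq, euclNorm_sq, mulVec_add, mulVec_sub, mulVec_smul, a, b,
    add_dotProduct, dotProduct_add, sub_dotProduct, dotProduct_sub, smul_dotProduct,
    dotProduct_smul, smul_eq_mul] at hup hlow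
  have hx := euclNorm_sq x
  have hy := euclNorm_sq y
  rw [← dotProduct_self_eq_sum_sq] at hx hy
  rw [← hx, ← hy, dotProduct_comm y, dotProduct_comm (A *ᵥ y)] at hup hlow
  have key : t * (A *ᵥ x ⬝ᵥ A *ᵥ y - x ⬝ᵥ y) ≤ t * (δ * t) := by
    linear_combination (hup + hlow) / 4
  exact le_of_mul_le_mul_left key htpos

lemma sum_sq_gram_sub_le (hA : RIP A L δ) (r : Fin d → ℝ) {W : Finset (Fin d)}
    (hL : #(W ∪ supp r) ≤ L) :
    ∑ i ∈ W, ((Aᵀ *ᵥ (A *ᵥ r)) i - r i) ^ 2 ≤ δ ^ 2 * ∑ i, r i ^ 2 := by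
  set e := Aᵀ *ᵥ (A *ᵥ r) - r
  set z := restrict e W
  have hz : ∑ i ∈ W, e i ^ 2 = euclNorm z ^ 2 := by
    simp [euclNorm_sq, z, _root_.restrict, ite_pow, sum_ite_mem]
  have hez : e ⬝ᵥ z = euclNorm z ^ 2 := by
    simp [← hz, dotProduct, z, _root_.restrict, sq, mul_ite, sum_ite_mem]
  have hgram : e ⬝ᵥ z = A *ᵥ r ⬝ᵥ A *ᵥ z - r ⬝ᵥ z := by
    rw [sub_dotProduct, mulVec_transpose, ← dotProduct_mulVec]
  have hbound := hA.dotProduct_mulVec_sub_le (x := r) (y := z)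
    ((card_le_card (union_subset subset_union_right
      ((supp_restrict_subset e W).trans subset_union_left))).trans hL)
  have hzr : euclNorm z ≤ δ * euclNorm r := by
    have hδr : 0 ≤ δ * euclNorm r := mul_nonneg hA.1.le (euclNorm_nonneg r)
    by_contra! h
    nlinarith [mul_lt_mul_of_pos_left h (hδr.trans_lt h)]
  calc ∑ i ∈ W, e i ^ 2 = euclNorm z ^ 2 := hz
    _ ≤ (δ * euclNorm r) ^ 2 := pow_le_pow_left₀ (euclNorm_nonneg z) hzr 2
    _ = δ ^ 2 * ∑ i, r i ^ 2 := by rw [mul_pow, euclNorm_sq]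

lemma sum_sq_sdiff_le_of_top_correlations (hA : RIP A L δ) {r : Fin d → ℝ}
    {B h : Finset (Fin d)} (hrB : supp r ⊆ B) (hBh : #B ≤ #h) (hL : #(B ∪ h) ≤ L)
    (htop : ∀ i ∈ h, ∀ j ∉ h, |(Aᵀ *ᵥ (A *ᵥ r)) j| ≤ |(Aᵀ *ᵥ (A *ᵥ r)) i|) :
    ∑ i ∈ B \ h, r i ^ 2 ≤ 2 * δ ^ 2 * ∑ i, r i ^ 2 := by
  set g := Aᵀ *ᵥ (A *ᵥ r)
  have hcomp : ∑ i ∈ B \ h, g i ^ 2 ≤ ∑ j ∈ h \ B, (g j - r j) ^ 2 := by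
    refine (sum_le_sum_of_card_le_of_forall_le (card_sdiff_le_card_sdiff_iff.2 hBh)
      (fun _ _ => sq_nonneg _) fun i hi j hj => sq_le_sq.2 ?_).trans_eq
        (sum_congr rfl fun j hj => ?_)
    · exact htop j (mem_sdiff.1 hj).1 i (mem_sdiff.1 hi).2
    · rw [eq_zero_of_notMem_supp fun hr => (mem_sdiff.1 hj).2 (hrB hr), sub_zero]
  have herr := hA.sum_sq_gram_sub_le r (W := B \ h ∪ h \ B) <| (card_le_card <|
    union_subset (union_subset (sdiff_subset.trans subset_union_left)
      (sdiff_subset.trans subset_union_right)) (hrB.trans subset_union_left)).trans hL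
  rw [sum_union disjoint_sdiff_sdiff] at herr
  calc ∑ i ∈ B \ h, r i ^ 2 ≤ ∑ i ∈ B \ h, (2 * g i ^ 2 + 2 * (g i - r i) ^ 2) :=
        sum_le_sum fun i _ => by nlinarith [sq_nonneg (2 * g i - r i)]
    _ = 2 * ∑ i ∈ B \ h, g i ^ 2 + 2 * ∑ i ∈ B \ h, (g i - r i) ^ 2 := by
        rw [sum_add_distrib, mul_sum, mul_sum]
    _ ≤ 2 * δ ^ 2 * ∑ i, r i ^ 2 := by linarith

end RIP

lemma LeastSq.sum_sq_sub_le {m d L : ℕ} {A : Matrix (Fin m) (Fin d) ℝ} {δ : ℝ}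
    (hA : RIP A L δ) {x u : Fin d → ℝ} {U : Finset (Fin d)} (hu : LeastSq A (A *ᵥ x) U u)
    (hL : #(supp x ∪ U) ≤ L) :
    ∑ i ∈ U, (x - u) i ^ 2 ≤ δ ^ 2 * ∑ i, (x - u) i ^ 2 := by
  have hnormal : ∀ i ∈ U, (Aᵀ *ᵥ (A *ᵥ (x - u))) i = 0 := fun i hi => by
    have hsingle : supp (Pi.single i 1 : Fin d → ℝ) ⊆ U := fun j hj => by
      rcases eq_or_ne j i with rfl | hji
      · exact hi
      · simp [mem_supp, hji] at hj
    have h0 : A *ᵥ (x - u) ⬝ᵥ A *ᵥ Pi.single i 1 = 0 := by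
      simpa only [mulVec_sub, dotProduct, Pi.sub_apply] using hu.2 _ hsingle
    rwa [dotProduct_mulVec, dotProduct_single, mul_one, ← mulVec_transpose] at h0
  have hsupp : supp (x - u) ⊆ supp x ∪ U :=
    (supp_sub_subset x u).trans (union_subset_union subset_rfl hu.1)
  have := hA.sum_sq_gram_sub_le (x - u) (W := U)
    ((card_le_card (union_subset subset_union_right hsupp)).trans hL)
  rwa [sum_congr rfl fun i hi => by rw [hnormal i hi, zero_sub, neg_sq]] at this

section Thresholding

variable {d : ℕ}

lemma sum_sq_le_of_subset_sdiff {x u : Fin d → ℝ} {S' c : Finset (Fin d)}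
    (hc : c ⊆ supp x \ S') (hcard : #(supp x) ≤ #S') (htop : ∀ i ∈ S', ∀ j ∉ S', |u j| ≤ |u i|) :
    ∑ i ∈ c, x i ^ 2 ≤ 2 * ∑ i ∈ c, (x - u) i ^ 2 + 2 * ∑ i ∈ S' \ supp x, (x - u) i ^ 2 := by
  -- `|u|` is larger on `S' \ supp x`, where `u = -(x - u)`, than on the discarded indices `c`
  have hcu : ∑ i ∈ c, u i ^ 2 ≤ ∑ j ∈ S' \ supp x, u j ^ 2 :=
    sum_le_sum_of_card_le_of_forall_le
      ((card_le_card hc).trans (card_sdiff_le_card_sdiff_iff.2 hcard))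
      (fun _ _ => sq_nonneg _) fun i hi j hj =>
        sq_le_sq.2 (htop j (mem_sdiff.1 hj).1 i (mem_sdiff.1 (hc hi)).2)
  have hux : ∑ j ∈ S' \ supp x, u j ^ 2 = ∑ j ∈ S' \ supp x, (x - u) j ^ 2 :=
    sum_congr rfl fun j hj => by simp [eq_zero_of_notMem_supp (mem_sdiff.1 hj).2]
  calc ∑ i ∈ c, x i ^ 2 ≤ ∑ i ∈ c, (2 * (x - u) i ^ 2 + 2 * u i ^ 2) :=
        sum_le_sum fun i _ => by
          simp only [Pi.sub_apply]
          nlinarith [sq_nonneg (x i - 2 * u i)]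
    _ ≤ 2 * ∑ i ∈ c, (x - u) i ^ 2 + 2 * ∑ i ∈ S' \ supp x, (x - u) i ^ 2 := by
        rw [sum_add_distrib, ← mul_sum, ← mul_sum, ← hux]
        linarith

lemma sum_sq_sub_restrict_le {x u : Fin d → ℝ} {U S' : Finset (Fin d)} (hS'U : S' ⊆ U)
    (hcard : #(supp x) ≤ #S') (htop : ∀ i ∈ S', ∀ j ∉ S', |u j| ≤ |u i|) :
    ∑ i, (x - restrict u S') i ^ 2 ≤ ∑ i ∈ supp x \ U, x i ^ 2 + 3 * ∑ i ∈ U, (x - u) i ^ 2 := by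
  set S := supp x
  set w := x - u
  -- the indices of `S ∩ U` discarded by the thresholding
  set c := (S \ S') ∩ U
  have hsplit : ∑ i, (x - restrict u S') i ^ 2 = ∑ i ∈ S', w i ^ 2 + ∑ i ∈ S \ S', x i ^ 2 := by
    rw [sum_sq_sub_eq_add_sum_sq_sdiff x _ S' fun i hi => by simp [_root_.restrict, hi]]
    congr 1
    exact sum_congr rfl fun i hi => by simp [_root_.restrict, hi, w]
  have hdrop : ∑ i ∈ S \ S', x i ^ 2 ≤ ∑ i ∈ S \ U, x i ^ 2 + ∑ i ∈ c, x i ^ 2 := by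
    rw [← sum_inter_add_sum_sdiff (S \ S') U, add_comm]
    exact add_le_add_left (sum_le_sum_of_subset_of_nonneg (sdiff_subset_sdiff sdiff_subset le_rfl)
      fun _ _ _ => sq_nonneg _) _
  have hc := sum_sq_le_of_subset_sdiff (u := u) (c := c) inter_subset_left hcard htop
  have hcU : c ⊆ U := inter_subset_right
  -- the factor `3`: `∑_{S'} + 2 ∑_c + 2 ∑_{S' \ S}` regroups into three sums over subsets of `U`
  have h1 := sum_add_sum_le_of_disjoint (f := fun i => w i ^ 2)
    (disjoint_left.2 fun i hi hic => (mem_sdiff.1 (mem_inter.1 hic).1).2 hi) hS'U hcU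
    fun _ _ => sq_nonneg _
  have h2 := sum_add_sum_le_of_disjoint (f := fun i => w i ^ 2)
    (disjoint_left.2 fun i hi hic => (mem_sdiff.1 hi).2 (mem_sdiff.1 (mem_inter.1 hic).1).1)
    (sdiff_subset.trans hS'U) hcU fun _ _ => sq_nonneg _
  have h3 : ∑ i ∈ S' \ S, w i ^ 2 ≤ ∑ i ∈ U, w i ^ 2 :=
    sum_le_sum_of_subset_of_nonneg (sdiff_subset.trans hS'U) fun _ _ _ => sq_nonneg _
  linarith

end Thresholding

namespace CoSaMPStep

variable {m d K : ℕ} {A : Matrix (Fin m) (Fin d) ℝ} {δ : ℝ}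

lemma card_supp_le {y : Fin m → ℝ} {xprev xnext : Fin d → ℝ}
    (hstep : CoSaMPStep K A y xprev xnext) : #(supp xnext) ≤ K := by
  obtain ⟨-, S', u, -, -, -, -, hS'card, -, rfl⟩ := hstep
  exact (card_le_card (supp_restrict_subset u S')).trans hS'card.le

lemma exists_sum_sq_sub_le (hA : RIP A (4 * K) δ) {x xprev xnext : Fin d → ℝ}
    (hx : #(supp x) ≤ K) (hprev : #(supp xprev) ≤ K)
    (hstep : CoSaMPStep K A (A *ᵥ x) xprev xnext) :
    ∃ T ⊆ supp x, ∑ i, (x - xnext) i ^ 2 ≤ (1 + 2 * δ ^ 2) / (1 - δ ^ 2) * ∑ i ∈ T, x i ^ 2 ∧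
      ∑ i ∈ T, x i ^ 2 ≤ 2 * δ ^ 2 * ∑ i, (x - xprev) i ^ 2 := by
  obtain ⟨h, S', u, hh, hhtop, hu, hS'U, hS'card, hS'top, rfl⟩ := hstep
  set U := supp xprev ∪ h
  have hU : #U ≤ 3 * K := (card_union_le _ _).trans (by omega)
  have hδ : 0 < 1 - δ ^ 2 := by nlinarith [hA.1, hA.2.1]
  refine ⟨supp x \ U, sdiff_subset, ?_, ?_⟩
  · have hest := hu.sum_sq_sub_le hA ((card_union_le _ _).trans (by omega))
    have hsplit := sum_sq_sub_eq_add_sum_sq_sdiff x u U fun i hi =>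
      eq_zero_of_notMem_supp fun hiu => hi (hu.1 hiu)
    have hprune := mul_le_mul_of_nonneg_left
      (sum_sq_sub_restrict_le hS'U (hx.trans hS'card.ge) hS'top) hδ.le
    rw [div_mul_eq_mul_div, le_div_iff₀ hδ]
    nlinarith
  · set B := supp x ∪ supp xprev
    have hB : #B ≤ 2 * K := (card_union_le _ _).trans (by omega)
    have hxr : ∑ i ∈ supp x \ U, x i ^ 2 = ∑ i ∈ supp x \ U, (x - xprev) i ^ 2 :=
      sum_congr rfl fun i hi => by
        simp [eq_zero_of_notMem_supp fun hp => (mem_sdiff.1 hi).2 (subset_union_left hp)]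
    have hTB : supp x \ U ⊆ B \ h := fun i hi => by
      simp only [mem_sdiff, mem_union, U, B, not_or] at hi ⊢
      tauto
    rw [hxr]
    refine (sum_le_sum_of_subset_of_nonneg hTB fun _ _ _ => sq_nonneg _).trans ?_
    simp only [← mulVec_sub] at hhtop
    exact hA.sum_sq_sdiff_le_of_top_correlations (supp_sub_subset x xprev)
      (by omega) ((card_union_le _ _).trans (by omega)) hhtop

end CoSaMPStep

-- The bookkeeping of one step of the potential below: `q` indices leave `B`, and `Z = w(B') / t'`.
lemma posLog_natCast_add_mul_add_log_le {R Z : ℝ} (hR0 : 0 < R) (hR1 : R < 1) (hZ : 0 ≤ Z)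
    (q : ℕ) (hq : q = 0 → 1 ≤ R * Z) :
    log⁺ (q + R * Z) + log (1 / R) ≤ q * log (4 / R) + log⁺ Z := by
  have hlogR : 0 < log (1 / R) := log_pos (one_lt_one_div hR0 hR1)
  have hlog4R : log (4 / R) = log 4 + log (1 / R) := by
    rw [← log_mul four_ne_zero (by positivity), mul_one_div]
  rcases q.eq_zero_or_pos with rfl | hq1
  · have hRZ := hq rfl
    have hZ1 : 1 ≤ Z := by nlinarith
    rw [Nat.cast_zero, zero_add, zero_mul, zero_add,
      posLog_eq_log (by rwa [abs_of_pos (by linarith)]), posLog_eq_log (by rwa [abs_of_nonneg hZ]),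
      log_mul hR0.ne' (by positivity), one_div, log_inv]
    linarith
  · have hpow : (2 * q : ℝ) ≤ 4 ^ q := by
      have := one_add_mul_le_pow (show (-2 : ℝ) ≤ 3 by norm_num) q
      norm_num at this
      linarith
    have h2q : log 2 + log⁺ q ≤ q * log 4 := by
      rw [log_of_nat_eq_posLog, ← log_mul (by norm_num) (by positivity), ← log_pow]
      exact log_le_log (by positivity) hpow
    have hRZ : log⁺ (R * Z) ≤ log⁺ Z :=
      posLog_le_posLog (by positivity) (by nlinarith)
    have hq1' : (1 : ℝ) ≤ q := by exact_mod_cast hq1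
    nlinarith [posLog_add (x := (q : ℝ)) (y := R * Z)]

section Potential

variable {ι : Type*} (S : Finset ι) (w : ι → ℝ) (R : ℝ)

noncomputable def thresholdPotential (t : ℝ) : ℝ :=
  log (4 / R) * #{i ∈ S | w i ≤ t} - log⁺ ((∑ i ∈ S with w i ≤ t, w i) / t)

variable {S w R}

lemma thresholdPotential_add_log_le (hR0 : 0 < R) (hR1 : R < 1) (hw : ∀ i ∈ S, 0 ≤ w i)
    {t t' : ℝ} (ht' : 0 < t') (hdecay : t' ≤ R * t)
    (hmass : t' ≤ R * ∑ i ∈ S with w i ≤ t, w i) :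
    thresholdPotential S w R t' + log (1 / R) ≤ thresholdPotential S w R t := by
  classical
  have ht : 0 < t := pos_of_mul_pos_right (ht'.trans_le hdecay) hR0.le
  set B := S.filter (w · ≤ t)
  set B' := S.filter (w · ≤ t')
  have hB'B : B' ⊆ B := fun i hi => by
    simp only [mem_filter, B, B'] at hi ⊢
    exact ⟨hi.1, by nlinarith⟩
  obtain ⟨q, hq⟩ : ∃ q, #B = #B' + q := ⟨_, (Nat.add_sub_cancel' (card_le_card hB'B)).symm⟩
  have hwB : ∀ i ∈ B, 0 ≤ w i := fun i hi => hw i (filter_subset _ _ hi)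
  have hwB' : 0 ≤ ∑ i ∈ B', w i := sum_nonneg fun i hi => hwB i (hB'B hi)
  set Z := (∑ i ∈ B', w i) / t'
  have hY : (∑ i ∈ B, w i) / t ≤ q + R * Z := by
    have hdiff : ∑ i ∈ B \ B', w i ≤ q * t := by
      have := sum_le_card_nsmul (B \ B') w t fun i hi => (mem_filter.1 (mem_sdiff.1 hi).1).2
      rwa [card_sdiff_of_subset hB'B, hq, Nat.add_sub_cancel_left, nsmul_eq_mul] at this
    have hsmall : (∑ i ∈ B', w i) / t ≤ R * Z := by
      rw [mul_div_assoc', div_le_div_iff₀ ht ht']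
      nlinarith
    rw [← sum_sdiff hB'B, add_div]
    exact add_le_add ((div_le_iff₀ ht).2 hdiff) hsmall
  have hZ : q = 0 → 1 ≤ R * Z := fun hq0 => by
    have : B' = B := eq_of_subset_of_card_le hB'B (by omega)
    rw [mul_div_assoc', le_div_iff₀ ht', one_mul, this]
    exact hmass
  have key := posLog_natCast_add_mul_add_log_le hR0 hR1 (div_nonneg hwB' ht'.le) q hZ
  have hmono := posLog_le_posLog (div_nonneg (sum_nonneg hwB) ht.le) hY
  unfold thresholdPotential
  rw [show #{i ∈ S | w i ≤ t} = #B from rfl, hq]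
  push_cast
  linarith

lemma log_lt_thresholdPotential (hR0 : 0 < R) (hR1 : R < 1) (hw : ∀ i ∈ S, 0 ≤ w i) {t : ℝ}
    (ht : 0 < t) (hne : {i ∈ S | w i ≤ t}.Nonempty) :
    log (1 / R) < thresholdPotential S w R t := by
  set b := #{i ∈ S | w i ≤ t}
  have hb : (1 : ℝ) ≤ b := by exact_mod_cast card_pos.2 hne
  have hmass : (∑ i ∈ S with w i ≤ t, w i) / t ≤ b := by
    rw [div_le_iff₀ ht, ← nsmul_eq_mul]
    exact sum_le_card_nsmul _ _ _ fun i hi => (mem_filter.1 hi).2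
  have hlogb : log⁺ (b : ℝ) < b * log 4 := by
    rw [log_of_nat_eq_posLog, ← log_pow]
    exact log_lt_log (by positivity) (by exact_mod_cast Nat.lt_pow_self (by norm_num))
  have hlog4R : log (4 / R) = log 4 + log (1 / R) := by
    rw [← log_mul four_ne_zero (by positivity), mul_one_div]
  have hlogR : 0 < log (1 / R) := log_pos (one_lt_one_div hR0 hR1)
  have := posLog_le_posLog (div_nonneg (sum_nonneg fun i hi => hw i (mem_filter.1 hi).1) ht.le)
    hmass
  unfold thresholdPotential
  nlinarith

lemma thresholdPotential_le (hR0 : 0 < R) (hR1 : R < 1) (t : ℝ) :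
    thresholdPotential S w R t ≤ log (4 / R) * #S := by
  have hcard : log (4 / R) * #{i ∈ S | w i ≤ t} ≤ log (4 / R) * #S :=
    mul_le_mul_of_nonneg_left (by exact_mod_cast card_filter_le _ _)
      (log_nonneg (by rw [le_div_iff₀ hR0]; linarith))
  exact (sub_le_self _ posLog_nonneg).trans hcard

lemma le_mul_sum_filter_of_subset (hR0 : 0 ≤ R) (hw : ∀ i ∈ S, 0 ≤ w i) {T : Finset ι}
    (hTS : T ⊆ S) {t t' : ℝ} (ht' : t' ≤ R * ∑ i ∈ T, w i) (hT : ∑ i ∈ T, w i ≤ t) :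
    t' ≤ R * ∑ i ∈ S with w i ≤ t, w i := by
  have hsub : T ⊆ {i ∈ S | w i ≤ t} := fun i hi =>
    mem_filter.2 ⟨hTS hi, (single_le_sum (fun j hj => hw j (hTS hj)) hi).trans hT⟩
  exact ht'.trans (mul_le_mul_of_nonneg_left
    (sum_le_sum_of_subset_of_nonneg hsub fun i hi _ => hw i (mem_filter.1 hi).1) hR0)

lemma thresholdPotential_add_mul_log_le (hR0 : 0 < R) (hR1 : R < 1) (hw : ∀ i ∈ S, 0 ≤ w i)
    {t : ℕ → ℝ} (hstep : ∀ n, ∃ T ⊆ S, t (n + 1) ≤ R * ∑ i ∈ T, w i ∧ ∑ i ∈ T, w i ≤ t n)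
    (n : ℕ) (hn : 0 < t n) :
    thresholdPotential S w R (t n) + n * log (1 / R) ≤ thresholdPotential S w R (t 0) := by
  induction n with
  | zero => simp
  | succ n ih =>
    obtain ⟨T, hTS, hnext, hT⟩ := hstep n
    have hTpos : 0 < ∑ i ∈ T, w i := pos_of_mul_pos_right (hn.trans_le hnext) hR0.le
    have := thresholdPotential_add_log_le hR0 hR1 hw hn
      (hnext.trans (mul_le_mul_of_nonneg_left hT hR0.le))
      (le_mul_sum_filter_of_subset hR0.le hw hTS hnext hT)
    push_cast
    linarith [ih (hTpos.trans_le hT)]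

theorem nonpos_of_le_mul_sum_subset (hR0 : 0 < R) (hR1 : R < 1) (hw : ∀ i ∈ S, 0 ≤ w i)
    {t : ℕ → ℝ} (hstep : ∀ n, ∃ T ⊆ S, t (n + 1) ≤ R * ∑ i ∈ T, w i ∧ ∑ i ∈ T, w i ≤ t n)
    {N : ℕ} (hN0 : 0 < N)
    (hN : log (4 / R) / log (1 / R) * #S ≤ N) : t N ≤ 0 := by
  by_contra! hpos
  obtain ⟨n, rfl⟩ := Nat.exists_eq_add_one_of_ne_zero hN0.ne'
  obtain ⟨T, hTS, hnext, hT⟩ := hstep n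
  have hmass := le_mul_sum_filter_of_subset hR0.le hw hTS hnext hT
  have hne : {i ∈ S | w i ≤ t n}.Nonempty := by
    by_contra hempty
    rw [not_nonempty_iff_eq_empty.1 hempty, sum_empty, mul_zero] at hmass
    linarith
  have htn : 0 < t n := (pos_of_mul_pos_right (hpos.trans_le hnext) hR0.le).trans_le hT
  have hlogR : 0 < log (1 / R) := log_pos (one_lt_one_div hR0 hR1)
  have h1 := log_lt_thresholdPotential hR0 hR1 hw htn hne
  have h2 := thresholdPotential_add_mul_log_le hR0 hR1 hw hstep n htn
  have h3 := thresholdPotential_le (S := S) (w := w) hR0 hR1 (t 0)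
  rw [div_mul_eq_mul_div, div_le_iff₀ hlogR] at hN
  push_cast at hN
  linarith

end Potential

theorem cosamp_convergence_general
    {m d K : ℕ} (hK : 0 < K)
    (A : Matrix (Fin m) (Fin d) ℝ) (xS : Fin d → ℝ)
    (δ4 ρ4 c : ℝ)
    (hxS : (supp xS).card ≤ K)
    (hRIP4 : RIP A (4 * K) δ4)
    (hρ4 : ρ4 = Real.sqrt (2 * δ4 ^ 2 * (1 + 2 * δ4 ^ 2) / (1 - δ4 ^ 2)))
    (hρ4lt : ρ4 < 1)
    (hc : c = Real.log (4 / ρ4 ^ 2) / Real.log (1 / ρ4 ^ 2))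
    (X : ℕ → Fin d → ℝ) (hX0 : X 0 = 0)
    (hsteps : ∀ i : ℕ, CoSaMPStep K A (A.mulVec xS) (X i) (X (i + 1))) :
    X ⌈c * K⌉₊ = xS := by
  have hδ0 : 0 < δ4 ^ 2 := pow_pos hRIP4.1 2
  have hδ1 : 0 < 1 - δ4 ^ 2 := by nlinarith [hRIP4.1, hRIP4.2.1]
  have hρsq : ρ4 ^ 2 = 2 * δ4 ^ 2 * ((1 + 2 * δ4 ^ 2) / (1 - δ4 ^ 2)) := by
    rw [hρ4, sq_sqrt (div_nonneg (by positivity) hδ1.le), mul_div_assoc]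
  have hR0 : 0 < ρ4 ^ 2 := hρsq ▸ mul_pos (by positivity) (div_pos (by positivity) hδ1)
  have hR1 : ρ4 ^ 2 < 1 := pow_lt_one₀ (hρ4 ▸ sqrt_nonneg _) hρ4lt two_ne_zero
  have hc0 : 0 < c := hc ▸ div_pos (log_pos ((one_lt_div hR0).2 (by linarith)))
    (log_pos (one_lt_one_div hR0 hR1))
  have hsparse : ∀ n, #(supp (X n)) ≤ K
    | 0 => by simp [hX0, supp]
    | n + 1 => (hsteps n).card_supp_le
  let t (n : ℕ) : ℝ := 2 * δ4 ^ 2 * ∑ i, (xS - X n) i ^ 2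
  have hstep (n : ℕ) :
      ∃ T ⊆ supp xS, t (n + 1) ≤ ρ4 ^ 2 * ∑ i ∈ T, xS i ^ 2 ∧ ∑ i ∈ T, xS i ^ 2 ≤ t n := by
    obtain ⟨T, hTS, hnext, hT⟩ := (hsteps n).exists_sum_sq_sub_le hRIP4 hxS (hsparse n)
    refine ⟨T, hTS, ?_, hT⟩
    rw [hρsq, mul_assoc (2 * δ4 ^ 2)]
    exact mul_le_mul_of_nonneg_left hnext (by positivity)
  have hN := nonpos_of_le_mul_sum_subset hR0 hR1 (fun i _ => sq_nonneg (xS i)) hstep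
    (Nat.ceil_pos.2 (mul_pos hc0 (Nat.cast_pos.2 hK))) (by
      rw [← hc]
      exact (mul_le_mul_of_nonneg_left (by exact_mod_cast hxS) hc0.le).trans (Nat.le_ceil _))
  have hzero : ∑ i, (xS - X ⌈c * K⌉₊) i ^ 2 = 0 :=
    le_antisymm (nonpos_of_mul_nonpos_right hN (by positivity)) (by positivity)
  exact (sub_eq_zero.1 (sum_sq_eq_zero_iff.1 hzero)).symm

/-- Theorem 1: with noiseless measurements `y = A x_S`, CoSaMP recovers
`x_S` exactly in `⌈cK⌉` iterations, where `c = ln(4/ρ_{4K}²)/ln(1/ρ_{4K}²)`. -/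
theorem cosamp_convergence
    {m d K : ℕ} (hK : 0 < K)
    (A : Matrix (Fin m) (Fin d) ℝ) (xS : Fin d → ℝ)
    (δ3 δ4 ρ4 c : ℝ)
    (hxS : (supp xS).card ≤ K)
    (hRIP3 : RIP A (3 * K) δ3) (hRIP4 : RIP A (4 * K) δ4)
    (hρ4 : ρ4 = Real.sqrt (2 * δ4 ^ 2 * (1 + 2 * δ4 ^ 2) / (1 - δ4 ^ 2)))
    (hρ4lt : ρ4 < 1)
    (hc : c = Real.log (4 / ρ4 ^ 2) / Real.log (1 / ρ4 ^ 2))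
    (X : ℕ → Fin d → ℝ) (hX0 : X 0 = 0)
    (hsteps : ∀ i : ℕ, CoSaMPStep K A (A.mulVec xS) (X i) (X (i + 1))) :
    X ⌈c * K⌉₊ = xS :=
  cosamp_convergence_general hK A xS δ4 ρ4 c hxS hRIP4 hρ4 hρ4lt hc X hX0 hsteps
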